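/- Let G be a Binomial(B, 1 − e^{−S/B}) random variable with B a positive integer and 0 ≤ S. Define the estimator Ŝ = −B·ln(1 − G/B) (well-defined when G < B). If the deviation δ = G − E[G] satisfies |δ| ≤ B·e^{−S/B}/2, then |Ŝ − S| ≤ 2|δ|·e^{S/B}. -/
import Mathlib

lemma abs_log_le_two_abs (r : ℝ) (h1 : 1/2 ≤ r) : |Real.log r| ≤ 2 * |r - 1| := by
  have hr : 0 < r := by linarith
  rcases le_or_gt 1 r with h | h
  · rw [abs_of_nonneg (Real.log_nonneg h), abs_of_nonneg (by linarith)]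
    have := Real.log_le_sub_one_of_pos hr
    linarith
  · rw [abs_of_nonpos (Real.log_nonpos hr.le h.le), abs_of_nonpos (by linarith)]
    have h2 := Real.one_sub_inv_le_log_of_pos hr
    have h3 : r⁻¹ - 1 ≤ 2 * (1 - r) := by
      rw [sub_le_iff_le_add, inv_le_iff_one_le_mul₀ hr]
      nlinarith
    linarith

theorem estimator_S_error_bound
    (B S G : ℝ) (hB : 0 < B) (hS : 0 ≤ S) (hG : 0 ≤ G)
    (hdev : |G - B * (1 - Real.exp (-(S / B)))| ≤ B * Real.exp (-(S / B)) / 2) :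
    |(-(B * Real.log (1 - G / B))) - S|
      ≤ 2 * |G - B * (1 - Real.exp (-(S / B)))| * Real.exp (S / B) := by
  set q := Real.exp (-(S / B)) with hqdef
  have hq : 0 < q := Real.exp_pos _
  set δ := G - B * (1 - q) with hδdef
  have hu : 1 - G / B = q - δ / B := by field_simp; ring
  have habs : |δ| ≤ B * q / 2 := hdev
  have hδle : δ ≤ B * q / 2 := (abs_le.mp habs).2
  have hδge : -(B * q / 2) ≤ δ := (abs_le.mp habs).1
  have hulb : q / 2 ≤ q - δ / B := by
    rw [le_sub_iff_add_le]
    have : δ / B ≤ q / 2 := by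
      rw [div_le_iff₀ hB] at *; nlinarith
    linarith
  set r := (q - δ / B) / q with hrdef
  have hr1 : 1/2 ≤ r := by
    rw [hrdef, le_div_iff₀ hq]
    linarith
  have hrpos : 0 < q - δ / B := lt_of_lt_of_le (by positivity) hulb
  have hlogr : Real.log (q - δ / B) = Real.log r + Real.log q := by
    rw [hrdef, Real.log_div hrpos.ne' hq.ne']; ring
  have hlogq : Real.log q = -(S / B) := Real.log_exp _
  have key : (-(B * Real.log (1 - G / B))) - S = -(B * Real.log r) := by
    rw [hu, hlogr, hlogq]
    field_simp
    ring
  rw [key, abs_neg, abs_mul, abs_of_pos hB]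
  have hb := abs_log_le_two_abs r hr1
  have hr1e : r - 1 = -(δ / (B * q)) := by
    rw [hrdef]; field_simp; ring
  have : |r - 1| = |δ| / (B * q) := by
    rw [hr1e, abs_neg, abs_div, abs_of_pos (mul_pos hB hq)]
  rw [this] at hb
  have hexp : Real.exp (S / B) = 1 / q := by
    rw [hqdef, Real.exp_neg, one_div, inv_inv]
  calc B * |Real.log r| ≤ B * (2 * (|δ| / (B * q))) := by
        exact mul_le_mul_of_nonneg_left hb hB.le
    _ = 2 * |δ| * Real.exp (S / B) := by
        rw [hexp]; field_simp
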